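/- arXiv:2505.01827 — 2 statements merged into one kernel-verified Lean document; each statement's English description precedes it below -/
import Mathlib

section
/- With the setup of the discrepancy function ψ(β) = ‖A x_β − b‖² − z (x_β minimizing ‖Ax − b‖² + β^{-1}‖Ψx‖², ker(A) ∩ ker(Ψ) = {0}), ψ has a unique positive root provided ‖(I_M − A A†) b‖² < z < ‖(I_M − A K (A K)†) b‖², where the columns of K form an orthonormal basis of ker(Ψ) and † denotes the Moore–Penrose pseudoinverse. -/
open Matrix

/-- The `i`-th largest eigenvalue (1-based, descending, with multiplicity) of a
real symmetric matrix; junk value `0` if the matrix is not Hermitian or `i` is out of range. -/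
noncomputable def eigH {n : ℕ} (A : Matrix (Fin n) (Fin n) ℝ) (i : ℕ) : ℝ :=
  if h : A.IsHermitian then
    (List.insertionSort (· ≥ ·) (List.ofFn h.eigenvalues)).getD (i - 1) 0
  else 0

/-- `B` is the Moore–Penrose pseudoinverse of `A` (four Penrose conditions). -/
def IsMoorePenrose {m n : ℕ} (A : Matrix (Fin m) (Fin n) ℝ) (B : Matrix (Fin n) (Fin m) ℝ) : Prop :=
  A * B * A = A ∧ B * A * B = B ∧ (A * B)ᵀ = A * B ∧ (B * A)ᵀ = B * A

/-!
Write `r β` for the squared residual of `x_ β`. A minimizer of the Tikhonov functional satisfies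
the normal equation `Aᵀ (A x - b) + β⁻¹ ΨᵀΨ x = 0`.

Uniqueness: if `r β₁ = r β₂`, comparing the two minimality conditions shows that the penalties
`‖Ψ x_ βᵢ‖²` agree, so `x_ β₁` also minimizes the `β₂`-functional. Subtracting the two normal
equations at `x_ β₁` gives `ΨᵀΨ x_ β₁ = 0` when `β₁ ≠ β₂`, so `x_ β₁` is a least-squares solution
and `r β₁ ≤ ‖(I - A A†) b‖² < z`.

Existence: `r` is continuous on `(0, ∞)` because `x_ β = (AᵀA + β⁻¹ ΨᵀΨ)⁻¹ Aᵀ b`. Comparing with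
`A† b` gives `r β < z` for large `β`. Comparing with `K (AK)† b ∈ ker Ψ` gives
`‖Ψ x_ β‖² ≤ β ‖(I - AK(AK)†) b‖²`, and `x ↦ A (x - K Kᵀ x)` vanishes on `ker Ψ`, so it is bounded
by a multiple of `‖Ψ x‖`; hence `r β > z` for small `β`. The intermediate value theorem concludes.
-/

theorem LinearMap.exists_norm_le_mul_norm_of_ker_le {𝕜 E F G : Type*} [NontriviallyNormedField 𝕜]
    [CompleteSpace 𝕜] [AddCommGroup E] [Module 𝕜 E] [NormedAddCommGroup F] [NormedSpace 𝕜 F]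
    [FiniteDimensional 𝕜 F] [NormedAddCommGroup G] [NormedSpace 𝕜 G] {f : E →ₗ[𝕜] F}
    {g : E →ₗ[𝕜] G} (h : LinearMap.ker f ≤ LinearMap.ker g) :
    ∃ C ≥ 0, ∀ x, ‖g x‖ ≤ C * ‖f x‖ := by
  let φ : LinearMap.range f →ₗ[𝕜] G :=
    (LinearMap.ker f).liftQ g h ∘ₗ f.quotKerEquivRange.symm.toLinearMap
  refine ⟨‖LinearMap.toContinuousLinearMap φ‖, norm_nonneg _, fun x ↦ ?_⟩
  have hφ : φ ⟨f x, LinearMap.mem_range_self f x⟩ = g x := by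
    simp [φ, LinearMap.quotKerEquivRange_symm_apply_image]
  rw [← hφ]
  exact (LinearMap.toContinuousLinearMap φ).le_opNorm _

section LeastSquares

variable {m n : Type*} [Fintype m] [Fintype n]

lemma dotProduct_self_eq_norm_sq (v : n → ℝ) : v ⬝ᵥ v = ‖WithLp.toLp 2 v‖ ^ 2 := by
  rw [EuclideanSpace.real_norm_sq_eq]
  simp [dotProduct, sq]

lemma sqrt_dotProduct_self (v : n → ℝ) : √(v ⬝ᵥ v) = ‖WithLp.toLp 2 v‖ := by
  rw [dotProduct_self_eq_norm_sq, Real.sqrt_sq (norm_nonneg _)]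

lemma dotProduct_self_nonneg (v : n → ℝ) : 0 ≤ v ⬝ᵥ v := by
  rw [dotProduct_self_eq_norm_sq]
  positivity

lemma eq_zero_of_forall_quadratic_nonneg {q L : ℝ} (h : ∀ t, 0 ≤ q * t ^ 2 + L * t) : L = 0 := by
  have hq : 0 < |q| + 1 := by positivity
  have ht := h (-L / (|q| + 1))
  rw [show q * (-L / (|q| + 1)) ^ 2 + L * (-L / (|q| + 1)) =
      L ^ 2 * (q - |q| - 1) / (|q| + 1) ^ 2 by field_simp; ring, le_div_iff₀ (by positivity),
    zero_mul] at ht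
  nlinarith [mul_nonneg (sq_nonneg L) (sub_nonneg.2 (le_abs_self q))]

lemma residual_add_smul (A : Matrix m n ℝ) (b : m → ℝ) (x v : n → ℝ) (t : ℝ) :
    (A *ᵥ (x + t • v) - b) ⬝ᵥ (A *ᵥ (x + t • v) - b) =
      (A *ᵥ x - b) ⬝ᵥ (A *ᵥ x - b) + 2 * t * (v ⬝ᵥ (Aᵀ *ᵥ (A *ᵥ x - b))) +
        t ^ 2 * ((A *ᵥ v) ⬝ᵥ (A *ᵥ v)) := by
  rw [dotProduct_mulVec, vecMul_transpose, mulVec_add, mulVec_smul,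
    show A *ᵥ x + t • A *ᵥ v - b = (A *ᵥ x - b) + t • A *ᵥ v by abel]
  simp only [dotProduct_add, add_dotProduct, dotProduct_smul, smul_dotProduct, smul_eq_mul,
    dotProduct_comm (A *ᵥ v)]
  ring

lemma residual_le_of_transpose_mulVec_eq_zero {A : Matrix m n ℝ} {b : m → ℝ} {x : n → ℝ}
    (h : Aᵀ *ᵥ (A *ᵥ x - b) = 0) (y : n → ℝ) :
    (A *ᵥ x - b) ⬝ᵥ (A *ᵥ x - b) ≤ (A *ᵥ y - b) ⬝ᵥ (A *ᵥ y - b) := by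
  have := residual_add_smul A b x (y - x) 1
  rw [one_smul, add_sub_cancel, h, dotProduct_zero] at this
  rw [this]
  nlinarith [dotProduct_self_nonneg (A *ᵥ (y - x))]

lemma dotProduct_self_one_sub_mul_mulVec [DecidableEq m] (A : Matrix m n ℝ) (B : Matrix n m ℝ)
    (b : m → ℝ) :
    ((1 - A * B) *ᵥ b) ⬝ᵥ ((1 - A * B) *ᵥ b) = (A *ᵥ (B *ᵥ b) - b) ⬝ᵥ (A *ᵥ (B *ᵥ b) - b) := by
  rw [sub_mulVec, one_mulVec, mulVec_mulVec, ← neg_sub, neg_dotProduct, dotProduct_neg, neg_neg]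

end LeastSquares

lemma IsMoorePenrose.transpose_mulVec_residual_eq_zero {m n : ℕ} {A : Matrix (Fin m) (Fin n) ℝ}
    {B : Matrix (Fin n) (Fin m) ℝ} (h : IsMoorePenrose A B) (b : Fin m → ℝ) :
    Aᵀ *ᵥ (A *ᵥ (B *ᵥ b) - b) = 0 := by
  obtain ⟨hABA, -, hAB, -⟩ := h
  have : Aᵀ * (A * B) = Aᵀ := by
    conv_lhs => rw [← hAB]
    rw [← transpose_mul, hABA]
  rw [mulVec_sub, mulVec_mulVec, mulVec_mulVec, Matrix.mul_assoc, this, sub_self]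

lemma IsMoorePenrose.residual_le {m n : ℕ} {A : Matrix (Fin m) (Fin n) ℝ}
    {B : Matrix (Fin n) (Fin m) ℝ} (h : IsMoorePenrose A B) (b : Fin m → ℝ) (y : Fin n → ℝ) :
    ((1 - A * B) *ᵥ b) ⬝ᵥ ((1 - A * B) *ᵥ b) ≤ (A *ᵥ y - b) ⬝ᵥ (A *ᵥ y - b) := by
  rw [dotProduct_self_one_sub_mul_mulVec]
  exact residual_le_of_transpose_mulVec_eq_zero (h.transpose_mulVec_residual_eq_zero b) y

section Tikhonov

variable {m n k : Type*} [Fintype m] [Fintype n] [Fintype k]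

def IsTikhonovMinimizer (A : Matrix m n ℝ) (Ψ : Matrix k n ℝ) (b : m → ℝ) (β : ℝ) (x : n → ℝ) :
    Prop :=
  ∀ y : n → ℝ, (A *ᵥ x - b) ⬝ᵥ (A *ᵥ x - b) + β⁻¹ * ((Ψ *ᵥ x) ⬝ᵥ (Ψ *ᵥ x)) ≤
    (A *ᵥ y - b) ⬝ᵥ (A *ᵥ y - b) + β⁻¹ * ((Ψ *ᵥ y) ⬝ᵥ (Ψ *ᵥ y))

namespace IsTikhonovMinimizer

variable {A : Matrix m n ℝ} {Ψ : Matrix k n ℝ} {b : m → ℝ} {β : ℝ} {x : n → ℝ}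

theorem gradient_eq_zero (h : IsTikhonovMinimizer A Ψ b β x) :
    Aᵀ *ᵥ (A *ᵥ x - b) + β⁻¹ • (Ψᵀ *ᵥ (Ψ *ᵥ x)) = 0 := by
  set g := Aᵀ *ᵥ (A *ᵥ x - b) + β⁻¹ • (Ψᵀ *ᵥ (Ψ *ᵥ x))
  have hg : g ⬝ᵥ g = g ⬝ᵥ (Aᵀ *ᵥ (A *ᵥ x - b)) + β⁻¹ * (g ⬝ᵥ (Ψᵀ *ᵥ (Ψ *ᵥ x))) :=
    (dotProduct_add _ _ _).trans (congrArg _ (dotProduct_smul _ _ _))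
  have hquad : ∀ t : ℝ,
      0 ≤ ((A *ᵥ g) ⬝ᵥ (A *ᵥ g) + β⁻¹ * ((Ψ *ᵥ g) ⬝ᵥ (Ψ *ᵥ g))) * t ^ 2 + 2 * (g ⬝ᵥ g) * t := by
    intro t
    have ht := h (x + t • g)
    rw [residual_add_smul, ← sub_zero (Ψ *ᵥ (x + t • g)), residual_add_smul] at ht
    simp only [sub_zero] at ht
    rw [hg]
    linarith
  exact dotProduct_self_eq_zero.1 (by linarith [eq_zero_of_forall_quadratic_nonneg hquad])

theorem normal_eq [DecidableEq n] (h : IsTikhonovMinimizer A Ψ b β x) :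
    (Aᵀ * A + β⁻¹ • (Ψᵀ * Ψ)) *ᵥ x = Aᵀ *ᵥ b := by
  have := h.gradient_eq_zero
  rw [mulVec_sub, sub_add_eq_add_sub, sub_eq_zero] at this
  rw [add_mulVec, smul_mulVec, ← mulVec_mulVec, ← mulVec_mulVec, this]

theorem penalty_le (h : IsTikhonovMinimizer A Ψ b β x) (hβ : 0 < β) {y : n → ℝ}
    (hy : Ψ *ᵥ y = 0) :
    (Ψ *ᵥ x) ⬝ᵥ (Ψ *ᵥ x) ≤ β * ((A *ᵥ y - b) ⬝ᵥ (A *ᵥ y - b)) := by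
  have hxy := h y
  rw [hy, dotProduct_zero, mul_zero, add_zero] at hxy
  have := dotProduct_self_nonneg (A *ᵥ x - b)
  rw [← div_le_iff₀' hβ, div_eq_inv_mul]
  linarith

theorem eq_of_residual_eq {β₁ β₂ : ℝ} {x₁ x₂ : n → ℝ} (h₁ : IsTikhonovMinimizer A Ψ b β₁ x₁)
    (h₂ : IsTikhonovMinimizer A Ψ b β₂ x₂) (hβ₁ : 0 < β₁) (hβ₂ : 0 < β₂)
    (hr : (A *ᵥ x₁ - b) ⬝ᵥ (A *ᵥ x₁ - b) = (A *ᵥ x₂ - b) ⬝ᵥ (A *ᵥ x₂ - b)) (y : n → ℝ)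
    (hy : (A *ᵥ y - b) ⬝ᵥ (A *ᵥ y - b) < (A *ᵥ x₁ - b) ⬝ᵥ (A *ᵥ x₁ - b)) : β₁ = β₂ := by
  have hpen : (Ψ *ᵥ x₁) ⬝ᵥ (Ψ *ᵥ x₁) = (Ψ *ᵥ x₂) ⬝ᵥ (Ψ *ᵥ x₂) := by
    have h12 := h₁ x₂
    have h21 := h₂ x₁
    rw [hr, add_le_add_iff_left, mul_le_mul_iff_right₀ (inv_pos.2 hβ₁)] at h12
    rw [hr, add_le_add_iff_left, mul_le_mul_iff_right₀ (inv_pos.2 hβ₂)] at h21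
    exact le_antisymm h12 h21
  have h₂' : IsTikhonovMinimizer A Ψ b β₂ x₁ := fun y ↦ by rw [hr, hpen]; exact h₂ y
  by_contra hne
  have hΨ : Ψᵀ *ᵥ (Ψ *ᵥ x₁) = 0 := by
    have := h₁.gradient_eq_zero.trans h₂'.gradient_eq_zero.symm
    rw [add_right_inj, ← sub_eq_zero, ← sub_smul, smul_eq_zero, sub_eq_zero,
      _root_.inv_inj] at this
    exact this.resolve_left hne
  have hls := h₁.gradient_eq_zero
  rw [hΨ, smul_zero, add_zero] at hls
  exact (residual_le_of_transpose_mulVec_eq_zero hls y).not_gt hy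

end IsTikhonovMinimizer

lemma isUnit_transpose_mul_add_smul [DecidableEq n] {A : Matrix m n ℝ} {Ψ : Matrix k n ℝ}
    (hker : ∀ x, A *ᵥ x = 0 → Ψ *ᵥ x = 0 → x = 0) {c : ℝ} (hc : 0 < c) :
    IsUnit (Aᵀ * A + c • (Ψᵀ * Ψ)) := by
  refine mulVec_injective_iff_isUnit.1 fun u v huv ↦ sub_eq_zero.1 ?_
  have hw : (u - v) ⬝ᵥ ((Aᵀ * A + c • (Ψᵀ * Ψ)) *ᵥ (u - v)) = 0 := by
    rw [mulVec_sub, huv, sub_self, dotProduct_zero]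
  rw [add_mulVec, smul_mulVec, ← mulVec_mulVec, ← mulVec_mulVec, dotProduct_add, dotProduct_smul,
    dotProduct_mulVec, vecMul_transpose, dotProduct_mulVec _ Ψᵀ, vecMul_transpose, smul_eq_mul,
    dotProduct_comm _ (A *ᵥ (u - v)), dotProduct_comm _ (Ψ *ᵥ (u - v))] at hw
  have hA := dotProduct_self_nonneg (A *ᵥ (u - v))
  have hΨ := mul_nonneg hc.le (dotProduct_self_nonneg (Ψ *ᵥ (u - v)))
  refine hker _ (dotProduct_self_eq_zero.1 (by linarith)) (dotProduct_self_eq_zero.1 ?_)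
  exact (mul_eq_zero.1 (by linarith)).resolve_left hc.ne'

lemma continuousOn_residual_of_isTikhonovMinimizer [DecidableEq n] {A : Matrix m n ℝ}
    {Ψ : Matrix k n ℝ} {b : m → ℝ} (hker : ∀ x, A *ᵥ x = 0 → Ψ *ᵥ x = 0 → x = 0)
    {x : ℝ → n → ℝ} (hx : ∀ β, 0 < β → IsTikhonovMinimizer A Ψ b β (x β)) :
    ContinuousOn (fun β ↦ (A *ᵥ x β - b) ⬝ᵥ (A *ᵥ x β - b)) (Set.Ioi 0) := by
  set T : ℝ → Matrix n n ℝ := fun β ↦ Aᵀ * A + β⁻¹ • (Ψᵀ * Ψ)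
  have hT : ∀ β ∈ Set.Ioi (0 : ℝ), IsUnit (T β).det := fun β hβ ↦
    (isUnit_iff_isUnit_det _).1 (isUnit_transpose_mul_add_smul hker (inv_pos.2 hβ))
  have hTinv : ContinuousOn (fun β ↦ (T β)⁻¹) (Set.Ioi 0) := by
    intro β hβ
    refine (continuousAt_matrix_inv _ ?_).comp_continuousWithinAt ?_
    · exact NormedRing.inverse_continuousAt (hT β hβ).unit
    · exact (continuousAt_const.add ((continuousAt_inv₀ (ne_of_gt hβ)).smul
        continuousAt_const)).continuousWithinAt
  have hxT : Set.EqOn x (fun β ↦ (T β)⁻¹ *ᵥ (Aᵀ *ᵥ b)) (Set.Ioi 0) := fun β hβ ↦ by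
    show _ = (T β)⁻¹ *ᵥ _
    rw [← (hx β hβ).normal_eq, mulVec_mulVec, nonsing_inv_mul _ (hT β hβ), one_mulVec]
  have hres : Continuous fun N : Matrix n n ℝ ↦
      (A *ᵥ (N *ᵥ (Aᵀ *ᵥ b)) - b) ⬝ᵥ (A *ᵥ (N *ᵥ (Aᵀ *ᵥ b)) - b) := by
    fun_prop
  exact (hres.comp_continuousOn hTinv).congr fun β hβ ↦ by simp only [hxT hβ, Function.comp]

end Tikhonov

section Discrepancy

open Filter Topology

variable {m n k p : Type*} [Fintype m] [Fintype n] [Fintype k] [Fintype p]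

lemma exists_norm_residual_proj_le [DecidableEq p] (A : Matrix m n ℝ) (Ψ : Matrix k n ℝ)
    {K : Matrix n p ℝ} (hK1 : Kᵀ * K = 1)
    (hK2 : LinearMap.ker Ψ.mulVecLin ≤ LinearMap.range K.mulVecLin) :
    ∃ C ≥ 0, ∀ (b : m → ℝ) (x : n → ℝ), ‖WithLp.toLp 2 (A *ᵥ (K *ᵥ (Kᵀ *ᵥ x)) - b)‖ ≤
      ‖WithLp.toLp 2 (A *ᵥ x - b)‖ + C * ‖WithLp.toLp 2 (Ψ *ᵥ x)‖ := by
  let f := (WithLp.linearEquiv 2 ℝ (k → ℝ)).symm.toLinearMap ∘ₗ Ψ.mulVecLin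
  let g := (WithLp.linearEquiv 2 ℝ (m → ℝ)).symm.toLinearMap ∘ₗ A.mulVecLin ∘ₗ
    (LinearMap.id - (K * Kᵀ).mulVecLin)
  have hfg : LinearMap.ker f ≤ LinearMap.ker g := by
    intro x hx
    obtain ⟨w, rfl⟩ := hK2 (by simpa [f] using hx)
    change WithLp.toLp 2 (A *ᵥ (K *ᵥ w - (K * Kᵀ) *ᵥ (K *ᵥ w))) = 0
    rw [mulVec_mulVec, Matrix.mul_assoc, hK1, Matrix.mul_one, sub_self, mulVec_zero]
    rfl
  obtain ⟨C, hC, hgf⟩ := LinearMap.exists_norm_le_mul_norm_of_ker_le hfg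
  refine ⟨C, hC, fun b x ↦ ?_⟩
  have hsplit : A *ᵥ (K *ᵥ (Kᵀ *ᵥ x)) - b = (A *ᵥ x - b) - A *ᵥ (x - (K * Kᵀ) *ᵥ x) := by
    rw [mulVec_sub A, ← mulVec_mulVec]
    abel
  rw [hsplit, WithLp.toLp_sub]
  exact (norm_sub_le _ _).trans (add_le_add le_rfl (hgf x))

variable {A : Matrix m n ℝ} {Ψ : Matrix k n ℝ} {b : m → ℝ} {x : ℝ → n → ℝ}

theorem exists_residual_lt_of_isTikhonovMinimizer
    (hx : ∀ β, 0 < β → IsTikhonovMinimizer A Ψ b β (x β)) (y : n → ℝ) {z : ℝ}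
    (hz : (A *ᵥ y - b) ⬝ᵥ (A *ᵥ y - b) < z) :
    ∃ β, 0 < β ∧ (A *ᵥ x β - b) ⬝ᵥ (A *ᵥ x β - b) < z := by
  have hlim : Tendsto (fun β : ℝ ↦ (A *ᵥ y - b) ⬝ᵥ (A *ᵥ y - b) + β⁻¹ * ((Ψ *ᵥ y) ⬝ᵥ (Ψ *ᵥ y)))
      atTop (𝓝 ((A *ᵥ y - b) ⬝ᵥ (A *ᵥ y - b))) := by
    simpa using ((tendsto_inv_atTop_zero (𝕜 := ℝ)).mul_const ((Ψ *ᵥ y) ⬝ᵥ (Ψ *ᵥ y))).const_add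
      ((A *ᵥ y - b) ⬝ᵥ (A *ᵥ y - b))
  obtain ⟨β, hβz, hβ⟩ := ((hlim.eventually (gt_mem_nhds hz)).and (eventually_gt_atTop 0)).exists
  have hpen := mul_nonneg (inv_pos.2 hβ).le (dotProduct_self_nonneg (Ψ *ᵥ x β))
  exact ⟨β, hβ, by linarith [hx β hβ y]⟩

theorem exists_lt_residual_of_isTikhonovMinimizer [DecidableEq p] {K : Matrix n p ℝ}
    (hK1 : Kᵀ * K = 1) (hK2 : LinearMap.range K.mulVecLin = LinearMap.ker Ψ.mulVecLin)
    (hx : ∀ β, 0 < β → IsTikhonovMinimizer A Ψ b β (x β)) {w₀ : p → ℝ}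
    (hw₀ : ∀ w, (A *ᵥ (K *ᵥ w₀) - b) ⬝ᵥ (A *ᵥ (K *ᵥ w₀) - b) ≤
      (A *ᵥ (K *ᵥ w) - b) ⬝ᵥ (A *ᵥ (K *ᵥ w) - b)) {z : ℝ}
    (hz : z < (A *ᵥ (K *ᵥ w₀) - b) ⬝ᵥ (A *ᵥ (K *ᵥ w₀) - b)) :
    ∃ β, 0 < β ∧ z < (A *ᵥ x β - b) ⬝ᵥ (A *ᵥ x β - b) := by
  rcases lt_or_ge z 0 with hz0 | hz0
  · exact ⟨1, one_pos, hz0.trans_le (dotProduct_self_nonneg _)⟩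
  set r₀ := (A *ᵥ (K *ᵥ w₀) - b) ⬝ᵥ (A *ᵥ (K *ᵥ w₀) - b)
  obtain ⟨C, hC, hproj⟩ := exists_norm_residual_proj_le A Ψ hK1 hK2.ge
  have hlim : Tendsto (fun β ↦ C * √(β * r₀)) (𝓝[>] 0) (𝓝 0) := by
    have : Continuous fun β : ℝ ↦ C * √(β * r₀) := by fun_prop
    simpa using (this.tendsto 0).mono_left nhdsWithin_le_nhds
  have hgap : 0 < √r₀ - √z := sub_pos.2 (Real.sqrt_lt_sqrt hz0 hz)
  obtain ⟨β, hβgap, hβ⟩ :=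
    ((hlim.eventually (gt_mem_nhds hgap)).and self_mem_nhdsWithin).exists
  have hΨK : Ψ *ᵥ (K *ᵥ w₀) = 0 := by
    simpa using (hK2.le ⟨w₀, rfl⟩ : K *ᵥ w₀ ∈ LinearMap.ker Ψ.mulVecLin)
  have hpen : ‖WithLp.toLp 2 (Ψ *ᵥ x β)‖ ≤ √(β * r₀) := by
    rw [← sqrt_dotProduct_self]
    exact Real.sqrt_le_sqrt ((hx β hβ).penalty_le hβ hΨK)
  have hr₀ : √r₀ ≤ ‖WithLp.toLp 2 (A *ᵥ (K *ᵥ (Kᵀ *ᵥ x β)) - b)‖ := by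
    rw [← sqrt_dotProduct_self]
    exact Real.sqrt_le_sqrt (hw₀ _)
  have hnorm : √z < ‖WithLp.toLp 2 (A *ᵥ x β - b)‖ := by
    nlinarith [hproj b (x β), mul_le_mul_of_nonneg_left hpen hC]
  refine ⟨β, hβ, ?_⟩
  rwa [dotProduct_self_eq_norm_sq, ← Real.sqrt_lt' ((Real.sqrt_nonneg z).trans_lt hnorm)]

end Discrepancy

theorem stmt_13_general (M N K P : ℕ) (A : Matrix (Fin M) (Fin N) ℝ) (Ψ : Matrix (Fin K) (Fin N) ℝ)
    (b : Fin M → ℝ) (z : ℝ)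
    (hker : ∀ x : Fin N → ℝ, A.mulVec x = 0 → Ψ.mulVec x = 0 → x = 0)
    (x_ : ℝ → (Fin N → ℝ))
    (hmin : ∀ β : ℝ, 0 < β → ∀ y : Fin N → ℝ,
      (A.mulVec (x_ β) - b) ⬝ᵥ (A.mulVec (x_ β) - b) +
          β⁻¹ * (Ψ.mulVec (x_ β) ⬝ᵥ Ψ.mulVec (x_ β)) ≤
        (A.mulVec y - b) ⬝ᵥ (A.mulVec y - b) + β⁻¹ * (Ψ.mulVec y ⬝ᵥ Ψ.mulVec y))
    (Kmat : Matrix (Fin N) (Fin P) ℝ) (hK1 : Kmatᵀ * Kmat = 1)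
    (hK2 : LinearMap.range Kmat.mulVecLin = LinearMap.ker Ψ.mulVecLin)
    (pA : Matrix (Fin N) (Fin M) ℝ)
    (pAK : Matrix (Fin P) (Fin M) ℝ) (hpAK : IsMoorePenrose (A * Kmat) pAK)
    (hz1 : ((1 - A * pA).mulVec b) ⬝ᵥ ((1 - A * pA).mulVec b) < z)
    (hz2 : z < ((1 - A * Kmat * pAK).mulVec b) ⬝ᵥ ((1 - A * Kmat * pAK).mulVec b)) :
    ∃! β : ℝ, 0 < β ∧
      (A.mulVec (x_ β) - b) ⬝ᵥ (A.mulVec (x_ β) - b) - z = 0 := by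
  have hx : ∀ β, 0 < β → IsTikhonovMinimizer A Ψ b β (x_ β) := hmin
  rw [dotProduct_self_one_sub_mul_mulVec] at hz1 hz2
  simp only [← mulVec_mulVec] at hz2
  have hlsK : ∀ w, (A *ᵥ (Kmat *ᵥ (pAK *ᵥ b)) - b) ⬝ᵥ (A *ᵥ (Kmat *ᵥ (pAK *ᵥ b)) - b) ≤
      (A *ᵥ (Kmat *ᵥ w) - b) ⬝ᵥ (A *ᵥ (Kmat *ᵥ w) - b) := fun w ↦ by
    simpa only [dotProduct_self_one_sub_mul_mulVec, ← mulVec_mulVec] using hpAK.residual_le b w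
  obtain ⟨β₁, hβ₁, hr₁⟩ := exists_residual_lt_of_isTikhonovMinimizer hx _ hz1
  obtain ⟨β₂, hβ₂, hr₂⟩ := exists_lt_residual_of_isTikhonovMinimizer hK1 hK2 hx hlsK hz2
  have hpos : Set.uIcc β₁ β₂ ⊆ Set.Ioi 0 := fun β hβ ↦ lt_min hβ₁ hβ₂ |>.trans_le hβ.1
  obtain ⟨β, hβ, hβz⟩ := intermediate_value_uIcc
    ((continuousOn_residual_of_isTikhonovMinimizer hker hx).mono hpos)
    (Set.mem_uIcc_of_le hr₁.le hr₂.le)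
  refine ⟨β, ⟨hpos hβ, sub_eq_zero.2 hβz⟩, fun β' ⟨hβ', hβ'z⟩ ↦ ?_⟩
  exact (hx β' hβ').eq_of_residual_eq (hx β (hpos hβ)) hβ' (hpos hβ)
    ((sub_eq_zero.1 hβ'z).trans hβz.symm) _ (hz1.trans_eq (sub_eq_zero.1 hβ'z).symm)

/-- The discrepancy function ψ has a unique positive root when
‖(I − AA†)b‖² < z < ‖(I − AK(AK)†)b‖². -/
theorem stmt_13 (M N K P : ℕ) (A : Matrix (Fin M) (Fin N) ℝ) (Ψ : Matrix (Fin K) (Fin N) ℝ)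
    (b : Fin M → ℝ) (z : ℝ)
    (hker : ∀ x : Fin N → ℝ, A.mulVec x = 0 → Ψ.mulVec x = 0 → x = 0)
    (x_ : ℝ → (Fin N → ℝ))
    (hmin : ∀ β : ℝ, 0 < β → ∀ y : Fin N → ℝ,
      (A.mulVec (x_ β) - b) ⬝ᵥ (A.mulVec (x_ β) - b) +
          β⁻¹ * (Ψ.mulVec (x_ β) ⬝ᵥ Ψ.mulVec (x_ β)) ≤
        (A.mulVec y - b) ⬝ᵥ (A.mulVec y - b) + β⁻¹ * (Ψ.mulVec y ⬝ᵥ Ψ.mulVec y))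
    (Kmat : Matrix (Fin N) (Fin P) ℝ) (hK1 : Kmatᵀ * Kmat = 1)
    (hK2 : LinearMap.range Kmat.mulVecLin = LinearMap.ker Ψ.mulVecLin)
    (pA : Matrix (Fin N) (Fin M) ℝ) (hpA : IsMoorePenrose A pA)
    (pAK : Matrix (Fin P) (Fin M) ℝ) (hpAK : IsMoorePenrose (A * Kmat) pAK)
    (hz1 : ((1 - A * pA).mulVec b) ⬝ᵥ ((1 - A * pA).mulVec b) < z)
    (hz2 : z < ((1 - A * Kmat * pAK).mulVec b) ⬝ᵥ ((1 - A * Kmat * pAK).mulVec b)) :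
    ∃! β : ℝ, 0 < β ∧
      (A.mulVec (x_ β) - b) ⬝ᵥ (A.mulVec (x_ β) - b) - z = 0 :=
  stmt_13_general M N K P A Ψ b z hker x_ hmin Kmat hK1 hK2 pA pAK hpAK hz1 hz2
end

section
/- Let A ∈ ℝ^{M×N}, Ψ ∈ ℝ^{K×N}, W diagonal with strictly positive entries, μ > 0, and suppose ker(A) ∩ ker(Ψ) = {0}. Then the unique minimizer of ‖Ax − b‖² + μ‖WΨx‖² over x ∈ ℝ^N equals (WΨ)_A† z* + x_ker, where z* is the unique minimizer of ‖Ā z − b̄‖² + μ‖z‖² over z ∈ ℝ^K, with x_ker = K(AK)†b, Ā = A (WΨ)_A†, b̄ = b − A x_ker, (WΨ)_A† = E (WΨ)†, and E = I_N − K(AK)†A (columns of K an orthonormal basis of ker(Ψ)). -/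
open Matrix

lemma aux_quad (L Q : ℝ) (hQ : 0 ≤ Q) (h : ∀ t : ℝ, 0 ≤ t * L + t ^ 2 * Q) : L = 0 := by
  have hQ1 : (0:ℝ) < Q + 1 := by linarith
  have h1 := h (-L / (Q + 1))
  have h2 : (-L / (Q + 1)) * L + (-L / (Q + 1)) ^ 2 * Q = -(L ^ 2) / (Q + 1) ^ 2 := by
    field_simp; ring
  rw [h2] at h1
  have h3 : (0:ℝ) < (Q + 1) ^ 2 := by positivity
  have h4 : L ^ 2 ≤ 0 := by
    by_contra hc
    push_neg at hc
    have : -(L ^ 2) / (Q + 1) ^ 2 < 0 := div_neg_of_neg_of_pos (by linarith) h3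
    linarith
  nlinarith [sq_nonneg L]

lemma dotT {m n : ℕ} (A : Matrix (Fin m) (Fin n) ℝ) (x : Fin m → ℝ) (y : Fin n → ℝ) :
    (Aᵀ.mulVec x) ⬝ᵥ y = x ⬝ᵥ (A.mulVec y) := by
  rw [Matrix.mulVec_transpose, ← Matrix.dotProduct_mulVec]

lemma dot_self_nonneg {n : ℕ} (v : Fin n → ℝ) : 0 ≤ v ⬝ᵥ v :=
  Finset.sum_nonneg fun i _ => mul_self_nonneg (v i)

lemma dot_expand {n : ℕ} (r u : Fin n → ℝ) (t : ℝ) :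
    (r + t • u) ⬝ᵥ (r + t • u) = r ⬝ᵥ r + t * (2 * (r ⬝ᵥ u)) + t ^ 2 * (u ⬝ᵥ u) := by
  have hc : u ⬝ᵥ r = r ⬝ᵥ u := dotProduct_comm u r
  simp only [dotProduct_add, add_dotProduct, smul_dotProduct, dotProduct_smul, smul_eq_mul, hc]
  ring

lemma dot_expand1 {n : ℕ} (r u : Fin n → ℝ) :
    (r + u) ⬝ᵥ (r + u) = r ⬝ᵥ r + 2 * (r ⬝ᵥ u) + u ⬝ᵥ u := by
  have h := dot_expand r u 1
  simpa using h

lemma mat_eq_of_mulVec {m n : ℕ} (X Y : Matrix (Fin m) (Fin n) ℝ)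
    (h : ∀ v, X.mulVec v = Y.mulVec v) : X = Y := by
  ext i j
  have := congrFun (h (Pi.single j 1)) i
  simpa using this

/-- Minimizer of a ridge-regression functional satisfies the normal equations. -/
lemma min_normal {m n : ℕ} (A : Matrix (Fin m) (Fin n) ℝ) (b : Fin m → ℝ) (μ : ℝ) (hμ : 0 ≤ μ)
    (x : Fin n → ℝ)
    (hmin : ∀ y, (A.mulVec x - b) ⬝ᵥ (A.mulVec x - b) + μ * (x ⬝ᵥ x) ≤
        (A.mulVec y - b) ⬝ᵥ (A.mulVec y - b) + μ * (y ⬝ᵥ y)) :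
    Aᵀ.mulVec (A.mulVec x - b) + μ • x = 0 := by
  set g := Aᵀ.mulVec (A.mulVec x - b) + μ • x with hg
  have key : ∀ v : Fin n → ℝ, g ⬝ᵥ v = 0 := by
    intro v
    have hgv : g ⬝ᵥ v = (A.mulVec x - b) ⬝ᵥ (A.mulVec v) + μ * (x ⬝ᵥ v) := by
      rw [hg, add_dotProduct, dotT, smul_dotProduct, smul_eq_mul]
    have hq : ∀ t : ℝ, 0 ≤ t * (2 * (g ⬝ᵥ v)) +
        t ^ 2 * ((A.mulVec v) ⬝ᵥ (A.mulVec v) + μ * (v ⬝ᵥ v)) := by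
      intro t
      have h := hmin (x + t • v)
      have e1 : A.mulVec (x + t • v) - b = (A.mulVec x - b) + t • (A.mulVec v) := by
        rw [Matrix.mulVec_add, Matrix.mulVec_smul]; abel
      rw [e1, dot_expand, dot_expand] at h
      rw [hgv]
      nlinarith [h]
    have hQ : 0 ≤ (A.mulVec v) ⬝ᵥ (A.mulVec v) + μ * (v ⬝ᵥ v) := by
      have h1 := dot_self_nonneg (A.mulVec v); have h2 := dot_self_nonneg v
      nlinarith
    have := aux_quad _ _ hQ hq
    linarith
  exact dotProduct_self_eq_zero.mp (key g)

/-- Standard-form transformation: the minimizer of the weighted general-form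
Tikhonov problem equals (WΨ)_A† z* + x_ker where z* minimizes the standard-form
problem. -/
theorem stmt_19 (M N K P : ℕ) (A : Matrix (Fin M) (Fin N) ℝ) (Ψ : Matrix (Fin K) (Fin N) ℝ)
    (w : Fin K → ℝ) (hw : ∀ k, 0 < w k) (μ : ℝ) (hμ : 0 < μ) (b : Fin M → ℝ)
    (hker : ∀ x : Fin N → ℝ, A.mulVec x = 0 → Ψ.mulVec x = 0 → x = 0)
    (Kmat : Matrix (Fin N) (Fin P) ℝ) (hK1 : Kmatᵀ * Kmat = 1)
    (hK2 : LinearMap.range Kmat.mulVecLin = LinearMap.ker Ψ.mulVecLin)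
    (pAK : Matrix (Fin P) (Fin M) ℝ) (hpAK : IsMoorePenrose (A * Kmat) pAK)
    (Bψ : Matrix (Fin N) (Fin K) ℝ) (hBψ : IsMoorePenrose (Matrix.diagonal w * Ψ) Bψ)
    (E : Matrix (Fin N) (Fin N) ℝ) (hE : E = 1 - Kmat * pAK * A)
    (PsiA : Matrix (Fin N) (Fin K) ℝ) (hPsiA : PsiA = E * Bψ)
    (xker : Fin N → ℝ) (hxker : xker = Kmat.mulVec (pAK.mulVec b))
    (Abar : Matrix (Fin M) (Fin K) ℝ) (hAbar : Abar = A * PsiA)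
    (bbar : Fin M → ℝ) (hbbar : bbar = b - A.mulVec xker)
    (xstar : Fin N → ℝ)
    (hx : ∀ y : Fin N → ℝ,
      (A.mulVec xstar - b) ⬝ᵥ (A.mulVec xstar - b) +
          μ * (((Matrix.diagonal w * Ψ).mulVec xstar) ⬝ᵥ
            ((Matrix.diagonal w * Ψ).mulVec xstar)) ≤
        (A.mulVec y - b) ⬝ᵥ (A.mulVec y - b) +
          μ * (((Matrix.diagonal w * Ψ).mulVec y) ⬝ᵥ ((Matrix.diagonal w * Ψ).mulVec y)))
    (zstar : Fin K → ℝ)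
    (hz : ∀ zz : Fin K → ℝ,
      (Abar.mulVec zstar - bbar) ⬝ᵥ (Abar.mulVec zstar - bbar) + μ * (zstar ⬝ᵥ zstar) ≤
        (Abar.mulVec zz - bbar) ⬝ᵥ (Abar.mulVec zz - bbar) + μ * (zz ⬝ᵥ zz)) :
    xstar = PsiA.mulVec zstar + xker := by
  set S : Matrix (Fin K) (Fin N) ℝ := Matrix.diagonal w * Ψ with hS
  set G : Matrix (Fin M) (Fin P) ℝ := A * Kmat with hG
  obtain ⟨hG1, hG2, hG3, hG4⟩ := hpAK
  obtain ⟨hB1, hB2, hB3, hB4⟩ := hBψ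
  set Winv : Matrix (Fin K) (Fin K) ℝ := Matrix.diagonal (fun k => (w k)⁻¹) with hWinv
  have hWW : Winv * Matrix.diagonal w = 1 := by
    rw [hWinv, Matrix.diagonal_mul_diagonal]
    have : (fun k => (w k)⁻¹ * w k) = fun _ : Fin K => (1:ℝ) :=
      funext fun k => inv_mul_cancel₀ (hw k).ne'
    rw [this, Matrix.diagonal_one]
  -- Ψ * Kmat = 0
  have hΨK : Ψ * Kmat = 0 := by
    apply mat_eq_of_mulVec
    intro v
    have hv : Kmat.mulVec v ∈ LinearMap.ker Ψ.mulVecLin := by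
      rw [← hK2]; exact ⟨v, rfl⟩
    have hv' := LinearMap.mem_ker.mp hv
    rw [Matrix.mulVecLin_apply] at hv'
    rw [← Matrix.mulVec_mulVec, hv', Matrix.zero_mulVec]
  have hSK : S * Kmat = 0 := by
    rw [hS, Matrix.mul_assoc, hΨK, Matrix.mul_zero]
  -- Gᵀ G pAK = Gᵀ
  have hGtG : Gᵀ * G * pAK = Gᵀ := by
    calc Gᵀ * G * pAK = Gᵀ * (G * pAK)ᵀ := by rw [hG3, Matrix.mul_assoc]
    _ = (G * pAK * G)ᵀ := by rw [Matrix.transpose_mul (G * pAK) G]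
    _ = Gᵀ := by rw [hG1]
  -- (S Bψ) Bψᵀ = Bψᵀ
  have hSBBt : S * Bψ * Bψᵀ = Bψᵀ := by
    calc S * Bψ * Bψᵀ = (S * Bψ)ᵀ * Bψᵀ := by rw [hB3]
    _ = (Bψ * (S * Bψ))ᵀ := by rw [Matrix.transpose_mul Bψ (S * Bψ)]
    _ = Bψᵀ := by rw [← Matrix.mul_assoc, hB2]
  -- S * PsiA = S * Bψ
  have hSPsiA : S * PsiA = S * Bψ := by
    rw [hPsiA, hE, Matrix.sub_mul, Matrix.one_mul, Matrix.mul_sub]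
    simp only [Matrix.mul_assoc]
    rw [← Matrix.mul_assoc S Kmat, hSK, Matrix.zero_mul, sub_zero]
  -- Ψ * (Bψ * S) = Ψ
  have hΨBS : Ψ * (Bψ * S) = Ψ := by
    have h1 : Matrix.diagonal w * (Ψ * (Bψ * S)) = Matrix.diagonal w * Ψ := by
      calc Matrix.diagonal w * (Ψ * (Bψ * S)) = S * Bψ * S := by
            rw [hS]; simp only [Matrix.mul_assoc]
      _ = Matrix.diagonal w * Ψ := by rw [hB1, hS]
    calc Ψ * (Bψ * S) = (Winv * Matrix.diagonal w) * (Ψ * (Bψ * S)) := by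
          rw [hWW, Matrix.one_mul]
    _ = Winv * (Matrix.diagonal w * Ψ) := by rw [Matrix.mul_assoc, h1]
    _ = (Winv * Matrix.diagonal w) * Ψ := by rw [Matrix.mul_assoc]
    _ = Ψ := by rw [hWW, Matrix.one_mul]
  -- the candidate minimizer
  set x0 : Fin N → ℝ := PsiA.mulVec zstar + xker with hx0
  -- normal equation for zstar
  have hzn : Abarᵀ.mulVec (Abar.mulVec zstar - bbar) + μ • zstar = 0 :=
    min_normal Abar bbar μ (le_of_lt hμ) zstar hz
  have hres : Abar.mulVec zstar - bbar = A.mulVec x0 - b := by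
    rw [hAbar, hbbar, hx0, Matrix.mulVec_add, ← Matrix.mulVec_mulVec]
    abel
  set q : Fin N → ℝ := Aᵀ.mulVec (A.mulVec x0 - b) with hq
  have hzn' : PsiAᵀ.mulVec q + μ • zstar = 0 := by
    have hAt : Abarᵀ = PsiAᵀ * Aᵀ := by rw [hAbar, Matrix.transpose_mul]
    rw [hres, hAt, ← Matrix.mulVec_mulVec, ← hq] at hzn
    exact hzn
  -- zstar ∈ range Bψᵀ, so (S Bψ) zstar = zstar
  have h2 : zstar = (-μ⁻¹) • PsiAᵀ.mulVec q := by
    have hμ' : μ ≠ 0 := ne_of_gt hμ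
    have hneg : μ • zstar = -(PsiAᵀ.mulVec q) :=
      eq_neg_of_add_eq_zero_right hzn'
    calc zstar = μ⁻¹ • (μ • zstar) := (inv_smul_smul₀ hμ' zstar).symm
    _ = μ⁻¹ • -(PsiAᵀ.mulVec q) := by rw [hneg]
    _ = (-μ⁻¹) • PsiAᵀ.mulVec q := by rw [smul_neg, neg_smul]
  have hzval : zstar = Bψᵀ.mulVec (Eᵀ.mulVec ((-μ⁻¹) • q)) := by
    rw [Matrix.mulVec_smul, Matrix.mulVec_smul, Matrix.mulVec_mulVec,
      ← Matrix.transpose_mul, ← hPsiA, ← h2]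
  have hSBz : (S * Bψ).mulVec zstar = zstar := by
    conv_lhs => rw [hzval]
    rw [Matrix.mulVec_mulVec, hSBBt]
    exact hzval.symm
  -- S x0 = zstar
  have hSxker : S.mulVec xker = 0 := by
    rw [hxker, Matrix.mulVec_mulVec, hSK, Matrix.zero_mulVec]
  have hSx0 : S.mulVec x0 = zstar := by
    rw [hx0, Matrix.mulVec_add, hSxker, add_zero, Matrix.mulVec_mulVec, hSPsiA, hSBz]
  -- the residual of the normal equations at x0
  set r : Fin N → ℝ := q + μ • Sᵀ.mulVec zstar with hr
  have hPr : PsiAᵀ.mulVec r = 0 := by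
    have hstep : PsiAᵀ.mulVec (Sᵀ.mulVec zstar) = zstar := by
      rw [Matrix.mulVec_mulVec, ← Matrix.transpose_mul, hSPsiA, hB3, hSBz]
    rw [hr, Matrix.mulVec_add, Matrix.mulVec_smul, hstep]
    exact hzn'
  have hKr : Kmatᵀ.mulVec r = 0 := by
    have hKS : Kmatᵀ.mulVec (Sᵀ.mulVec zstar) = 0 := by
      rw [Matrix.mulVec_mulVec, ← Matrix.transpose_mul, hSK, Matrix.transpose_zero,
        Matrix.zero_mulVec]
    have hGAE : Gᵀ * A * (1 - Kmat * pAK * A) = 0 := by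
      calc Gᵀ * A * (1 - Kmat * pAK * A) = Gᵀ * A - (Gᵀ * G * pAK) * A := by
            rw [Matrix.mul_sub, Matrix.mul_one, hG]; simp only [Matrix.mul_assoc]
      _ = 0 := by rw [hGtG, sub_self]
    have hGAP : Gᵀ * A * PsiA = 0 := by
      rw [hPsiA, hE, ← Matrix.mul_assoc, hGAE, Matrix.zero_mul]
    have hKq : Kmatᵀ.mulVec q = 0 := by
      have hKA : Kmatᵀ * Aᵀ = Gᵀ := by rw [hG, Matrix.transpose_mul]
      rw [hq, Matrix.mulVec_mulVec, hKA, Matrix.mulVec_sub, hx0, Matrix.mulVec_add,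
        Matrix.mulVec_add, hxker]
      have e1 : Gᵀ.mulVec (A.mulVec (PsiA.mulVec zstar)) = 0 := by
        rw [Matrix.mulVec_mulVec, Matrix.mulVec_mulVec, hGAP, Matrix.zero_mulVec]
      have e2 : Gᵀ.mulVec (A.mulVec (Kmat.mulVec (pAK.mulVec b))) = Gᵀ.mulVec b := by
        rw [Matrix.mulVec_mulVec, Matrix.mulVec_mulVec, Matrix.mulVec_mulVec,
          Matrix.mul_assoc Gᵀ A Kmat, ← hG, hGtG]
      rw [e1, e2]
      abel
    rw [hr, Matrix.mulVec_add, Matrix.mulVec_smul, hKq, hKS, smul_zero, add_zero]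
  -- r = 0
  have hr0 : r = 0 := by
    set u : Fin K → ℝ := S.mulVec r with hu
    have hker_mem : r - Bψ.mulVec u ∈ LinearMap.ker Ψ.mulVecLin := by
      rw [LinearMap.mem_ker, Matrix.mulVecLin_apply, Matrix.mulVec_sub, hu,
        Matrix.mulVec_mulVec, Matrix.mulVec_mulVec, Matrix.mul_assoc, hΨBS, sub_self]
    rw [← hK2] at hker_mem
    obtain ⟨p0, hp0⟩ := hker_mem
    rw [Matrix.mulVecLin_apply] at hp0
    have hdecomp : r = PsiA.mulVec u +
        Kmat.mulVec (p0 + pAK.mulVec (A.mulVec (Bψ.mulVec u))) := by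
      have hPu : PsiA.mulVec u =
          Bψ.mulVec u - Kmat.mulVec (pAK.mulVec (A.mulVec (Bψ.mulVec u))) := by
        rw [hPsiA, hE, Matrix.sub_mul, Matrix.one_mul, Matrix.sub_mulVec]
        congr 1
        simp only [Matrix.mulVec_mulVec, Matrix.mul_assoc]
      rw [hPu, Matrix.mulVec_add, hp0]
      abel
    have hrr : r ⬝ᵥ r = 0 := by
      nth_rewrite 1 [hdecomp]
      rw [add_dotProduct]
      have h1 : (PsiA.mulVec u) ⬝ᵥ r = u ⬝ᵥ (PsiAᵀ.mulVec r) := by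
        rw [← dotT PsiAᵀ, Matrix.transpose_transpose]
      have h2 : (Kmat.mulVec (p0 + pAK.mulVec (A.mulVec (Bψ.mulVec u)))) ⬝ᵥ r
          = (p0 + pAK.mulVec (A.mulVec (Bψ.mulVec u))) ⬝ᵥ (Kmatᵀ.mulVec r) := by
        rw [← dotT Kmatᵀ, Matrix.transpose_transpose]
      rw [h1, h2, hPr, hKr, dotProduct_zero, dotProduct_zero, add_zero]
    exact dotProduct_self_eq_zero.mp hrr
  -- compare values at xstar and x0
  set d : Fin N → ℝ := xstar - x0 with hd
  have hxs : xstar = x0 + d := by rw [hd]; abel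
  have hexp : (A.mulVec xstar - b) ⬝ᵥ (A.mulVec xstar - b) +
      μ * ((S.mulVec xstar) ⬝ᵥ (S.mulVec xstar)) =
      ((A.mulVec x0 - b) ⬝ᵥ (A.mulVec x0 - b) + μ * ((S.mulVec x0) ⬝ᵥ (S.mulVec x0)))
      + 2 * (d ⬝ᵥ r) +
      ((A.mulVec d) ⬝ᵥ (A.mulVec d) + μ * ((S.mulVec d) ⬝ᵥ (S.mulVec d))) := by
    have e1 : A.mulVec xstar - b = (A.mulVec x0 - b) + A.mulVec d := by
      rw [hxs, Matrix.mulVec_add]; abel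
    have e2 : S.mulVec xstar = S.mulVec x0 + S.mulVec d := by
      rw [hxs, Matrix.mulVec_add]
    have e3 : d ⬝ᵥ r = (A.mulVec x0 - b) ⬝ᵥ (A.mulVec d) +
        μ * ((S.mulVec x0) ⬝ᵥ (S.mulVec d)) := by
      rw [hr, dotProduct_add, dotProduct_smul, smul_eq_mul]
      have f1 : d ⬝ᵥ q = (A.mulVec x0 - b) ⬝ᵥ (A.mulVec d) := by
        rw [hq, dotProduct_comm, dotT]
      have f2 : d ⬝ᵥ (Sᵀ.mulVec zstar) = (S.mulVec x0) ⬝ᵥ (S.mulVec d) := by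
        rw [dotProduct_comm, dotT, hSx0]
      rw [f1, f2]
    rw [e1, e2, dot_expand1 (A.mulVec x0 - b) (A.mulVec d),
      dot_expand1 (S.mulVec x0) (S.mulVec d), e3]
    ring
  have hle := hx x0
  have hd0 : d ⬝ᵥ r = 0 := by rw [hr0, dotProduct_zero]
  rw [hexp, hd0] at hle
  have n1 := dot_self_nonneg (A.mulVec d)
  have n2 := dot_self_nonneg (S.mulVec d)
  have n3 : 0 ≤ μ * ((S.mulVec d) ⬝ᵥ (S.mulVec d)) := mul_nonneg hμ.le n2
  have hA0 : (A.mulVec d) ⬝ᵥ (A.mulVec d) = 0 := by linarith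
  have hS0 : (S.mulVec d) ⬝ᵥ (S.mulVec d) = 0 := by
    have hb : μ * ((S.mulVec d) ⬝ᵥ (S.mulVec d)) ≤ 0 := by linarith
    have := le_antisymm hb n3
    rcases mul_eq_zero.mp this with h | h
    · exact absurd h (ne_of_gt hμ)
    · exact h
  have hAd : A.mulVec d = 0 := dotProduct_self_eq_zero.mp hA0
  have hSd : S.mulVec d = 0 := dotProduct_self_eq_zero.mp hS0
  have hΨd : Ψ.mulVec d = 0 := by
    have hWd : Winv.mulVec (S.mulVec d) = 0 := by rw [hSd, Matrix.mulVec_zero]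
    rwa [Matrix.mulVec_mulVec, hS, ← Matrix.mul_assoc, hWW, Matrix.one_mul] at hWd
  have hdz : d = 0 := hker d hAd hΨd
  have : xstar - x0 = 0 := by rw [← hd, hdz]
  have hfin : xstar = x0 := by
    have := sub_eq_zero.mp this
    exact this
  rw [hfin, hx0]
end
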